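/- Let λ be the hyperbolic measure dλ = dx dy/y² on the upper half-plane. For m ≥ 0 and t ∈ [0,1], define C_m(t) = {(x,y) : y > max(2|x−t|, 2^{−m}), |x−t| < 1/2}. Then for all t, s ∈ [0,1]: λ(C_m(t) ∩ C_m(s)) = m log 2 + 1 − 2^m|t−s| if |t−s| < 2^{−m}, and λ(C_m(t) ∩ C_m(s)) = log(1/|t−s|) if 2^{−m} ≤ |t−s| ≤ 1. -/

import Mathlib

open MeasureTheory

/-- The hyperbolic measure dλ = dx dy / y² on ℝ × ℝ. -/
noncomputable def hypMeasure : Measure (ℝ × ℝ) :=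
  volume.withDensity (fun p => ENNReal.ofReal (1 / p.2 ^ 2))

/-- The truncated cone region `C_m(t)` of the Bacry–Muzy decomposition. -/
def coneSet (m : ℕ) (t : ℝ) : Set (ℝ × ℝ) :=
  {p : ℝ × ℝ | max (2 * |p.1 - t|) ((2 : ℝ) ^ (-(m : ℤ))) < p.2 ∧ |p.1 - t| < 1 / 2}

open Set Real

/-!
The intersection `C_m(t) ∩ C_m(s)` is the region above the graph of
`x ↦ max (2 |x - c| + d) 2^{-m}` over `|x - c| < (1 - d) / 2`, where `c = (s + t) / 2` and
`d = |t - s|`. Integrating `y⁻²` over each vertical ray leaves the reciprocal of that function,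
and the two-to-one substitution `u = 2 |x - c| + d` turns the `x`-integral into
`∫_d^1 du / max(u, 2^{-m})`. This is `log (1 / d)` when `2^{-m} ≤ d`, and otherwise
`(2^{-m} - d) 2^m` from the flat part plus `log 2^m` from the rest.
-/

lemma lintegral_Ioi_one_div_sq {a : ℝ} (ha : 0 < a) :
    ∫⁻ y in Ioi a, ENNReal.ofReal (1 / y ^ 2) = ENNReal.ofReal (1 / a) := by
  have hpow : EqOn (fun y : ℝ => y ^ (-2 : ℝ)) (fun y => 1 / y ^ 2) (Ioi a) := fun y hy => by
    simp [Real.rpow_neg (ha.trans hy).le]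
  have hint : IntegrableOn (fun y : ℝ => 1 / y ^ 2) (Ioi a) :=
    (integrableOn_Ioi_rpow_of_lt (by norm_num) ha).congr_fun hpow measurableSet_Ioi
  rw [← ofReal_integral_eq_lintegral_ofReal hint (ae_of_all _ fun y => by positivity),
    ← setIntegral_congr_fun measurableSet_Ioi hpow, integral_Ioi_rpow_of_lt (by norm_num) ha]
  norm_num [Real.rpow_neg_one]

lemma hypMeasure_setOf_mem_lt {S : Set ℝ} (hS : MeasurableSet S) {g : ℝ → ℝ} (hg : Measurable g)
    (hg_pos : ∀ x, 0 < g x) :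
    hypMeasure {p : ℝ × ℝ | p.1 ∈ S ∧ g p.1 < p.2} = ∫⁻ x in S, ENNReal.ofReal (1 / g x) := by
  set A := {p : ℝ × ℝ | p.1 ∈ S ∧ g p.1 < p.2}
  have hA : MeasurableSet A :=
    (hS.preimage measurable_fst).inter (measurableSet_lt (hg.comp measurable_fst) measurable_snd)
  have hslice (x : ℝ) : ∫⁻ y, A.indicator (fun p => ENNReal.ofReal (1 / p.2 ^ 2)) (x, y) =
      S.indicator (fun x => ENNReal.ofReal (1 / g x)) x := by
    by_cases hx : x ∈ S
    · have : (fun y => A.indicator (fun p => ENNReal.ofReal (1 / p.2 ^ 2)) (x, y)) =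
          (Ioi (g x)).indicator (fun y => ENNReal.ofReal (1 / y ^ 2)) := by
        ext y; simp [A, indicator, hx]
      rw [this, lintegral_indicator measurableSet_Ioi, lintegral_Ioi_one_div_sq (hg_pos x),
        indicator_of_mem hx]
    · simp [A, indicator, hx]
  rw [hypMeasure, withDensity_apply _ hA, ← lintegral_indicator hA, Measure.volume_eq_prod,
    lintegral_prod _ ((Measurable.indicator (by fun_prop) hA).aemeasurable),
    lintegral_congr hslice, lintegral_indicator hS]

lemma max_abs_sub_abs_sub (x s t : ℝ) :
    max |x - t| |x - s| = |x - (s + t) / 2| + |t - s| / 2 := by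
  grind [abs_eq_max_neg]

lemma coneSet_inter (m : ℕ) (s t : ℝ) :
    coneSet m t ∩ coneSet m s =
      {p : ℝ × ℝ | p.1 ∈ Ioo ((s + t) / 2 - (1 - |t - s|) / 2) ((s + t) / 2 + (1 - |t - s|) / 2) ∧
        max (2 * |p.1 - (s + t) / 2| + |t - s|) ((2 : ℝ) ^ (-(m : ℤ))) < p.2} := by
  ext ⟨x, y⟩
  have hmax := max_abs_sub_abs_sub x s t
  have h2max : 2 * |x - (s + t) / 2| + |t - s| = max (2 * |x - t|) (2 * |x - s|) := by
    rw [← mul_max_of_nonneg _ _ zero_le_two, hmax]; ring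
  have hhalf : |x - t| < 1 / 2 ∧ |x - s| < 1 / 2 ↔ |x - (s + t) / 2| < (1 - |t - s|) / 2 := by
    rw [← max_lt_iff, hmax]; constructor <;> intro <;> linarith
  simp only [coneSet, mem_inter_iff, mem_ofPred_eq, ← Real.ball_eq_Ioo, Metric.mem_ball,
    Real.dist_eq, h2max, max_lt_iff, ← hhalf]
  tauto

lemma continuous_one_div_max {ε : ℝ} (hε : 0 < ε) : Continuous fun u : ℝ => 1 / max u ε :=
  continuous_const.div (by fun_prop) fun u => (hε.trans_le (le_max_right u ε)).ne'

lemma integral_Ioo_one_div_max_abs {ε d : ℝ} (hε : 0 < ε) (hd : d ≤ 1) (c : ℝ) :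
    ∫ x in Ioo (c - (1 - d) / 2) (c + (1 - d) / 2), 1 / max (2 * |x - c| + d) ε =
      ∫ u in d..1, 1 / max u ε := by
  set g : ℝ → ℝ := fun u => 1 / max u ε
  have hr : 0 ≤ (1 - d) / 2 := by linarith
  set r := (1 - d) / 2 with hr_def
  have hg : Continuous fun x => g (2 * |x| + d) := (continuous_one_div_max hε).comp (by fun_prop)
  have hright : ∫ x in (0 : ℝ)..r, g (2 * |x| + d) = 2⁻¹ * ∫ u in d..1, g u := by
    rw [intervalIntegral.integral_congr (g := fun x => g (2 * x + d)) fun x hx => by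
      rw [uIcc_of_le hr] at hx; simp only [abs_of_nonneg hx.1],
      intervalIntegral.integral_comp_mul_add _ two_ne_zero, mul_zero, zero_add,
      show 2 * r + d = 1 by rw [hr_def]; ring, smul_eq_mul]
  have hleft : ∫ x in (0 : ℝ)..r, g (2 * |x| + d) = ∫ x in -r..0, g (2 * |x| + d) := by
    simpa using intervalIntegral.integral_comp_neg (a := 0) (b := r) fun x => g (2 * |x| + d)
  rw [← integral_Ioc_eq_integral_Ioo, ← intervalIntegral.integral_of_le (by linarith),
    intervalIntegral.integral_comp_sub_right (fun x => g (2 * |x| + d)), add_sub_cancel_left,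
    sub_sub_cancel_left, ← intervalIntegral.integral_add_adjacent_intervals
      (hg.intervalIntegrable _ 0) (hg.intervalIntegrable 0 _), ← hleft, hright]
  ring

lemma integral_one_div_max_of_le {ε d : ℝ} (hε : 0 < ε) (hεd : ε ≤ d) (hd : d ≤ 1) :
    ∫ u in d..1, 1 / max u ε = log (1 / d) := by
  rw [intervalIntegral.integral_congr (g := fun u => 1 / u) fun u hu => by
    rw [uIcc_of_le hd] at hu; simp only [max_eq_left (hεd.trans hu.1)]]
  exact integral_one_div_of_pos (hε.trans_le hεd) one_pos

lemma integral_one_div_max_of_lt {ε d : ℝ} (hd : 0 ≤ d) (hdε : d < ε) (hε : ε ≤ 1) :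
    ∫ u in d..1, 1 / max u ε = 1 - d / ε - log ε := by
  have hε0 : 0 < ε := hd.trans_lt hdε
  have hg := continuous_one_div_max hε0
  have hflat : ∫ u in d..ε, 1 / max u ε = (ε - d) / ε := by
    rw [intervalIntegral.integral_congr (g := fun _ => 1 / ε) fun u hu => by
      rw [uIcc_of_le hdε.le] at hu; simp only [max_eq_right hu.2]]
    simp [div_eq_mul_inv]
  rw [← intervalIntegral.integral_add_adjacent_intervals (hg.intervalIntegrable d ε)
    (hg.intervalIntegrable ε 1), hflat, integral_one_div_max_of_le hε0 le_rfl hε, one_div, log_inv]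
  field_simp
  ring

lemma hypMeasure_coneSet_inter (m : ℕ) {s t : ℝ} (hts : |t - s| ≤ 1) :
    hypMeasure (coneSet m t ∩ coneSet m s) =
      ENNReal.ofReal (∫ u in |t - s|..1, 1 / max u ((2 : ℝ) ^ (-(m : ℤ)))) := by
  set ε : ℝ := 2 ^ (-(m : ℤ))
  have hε : 0 < ε := by positivity
  have hg : Continuous fun x => max (2 * |x - (s + t) / 2| + |t - s|) ε := by fun_prop
  have hg_pos (x : ℝ) : 0 < max (2 * |x - (s + t) / 2| + |t - s|) ε := hε.trans_le (le_max_right _ _)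
  have hint : IntegrableOn (fun x => 1 / max (2 * |x - (s + t) / 2| + |t - s|) ε)
      (Ioo ((s + t) / 2 - (1 - |t - s|) / 2) ((s + t) / 2 + (1 - |t - s|) / 2)) :=
    (continuous_const.div hg fun x => (hg_pos x).ne').integrableOn_Icc.mono_set Ioo_subset_Icc_self
  rw [coneSet_inter, hypMeasure_setOf_mem_lt measurableSet_Ioo hg.measurable hg_pos,
    ← ofReal_integral_eq_lintegral_ofReal hint (ae_of_all _ fun x => (one_div_pos.2 (hg_pos x)).le),
    integral_Ioo_one_div_max_abs hε hts]

theorem hypMeasure_cone_inter_general (m : ℕ) (t s : ℝ) :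
    (|t - s| < (2 : ℝ) ^ (-(m : ℤ)) →
      hypMeasure (coneSet m t ∩ coneSet m s) =
        ENNReal.ofReal ((m : ℝ) * Real.log 2 + 1 - 2 ^ (m : ℕ) * |t - s|)) ∧
    ((2 : ℝ) ^ (-(m : ℤ)) ≤ |t - s| → |t - s| ≤ 1 →
      hypMeasure (coneSet m t ∩ coneSet m s) = ENNReal.ofReal (Real.log (1 / |t - s|))) := by
  have hε : (0 : ℝ) < 2 ^ (-(m : ℤ)) := by positivity
  have hε_le_one : (2 : ℝ) ^ (-(m : ℤ)) ≤ 1 := zpow_le_one_of_nonpos₀ one_le_two (by simp)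
  refine ⟨fun hlt => ?_, fun hge hle => ?_⟩
  · rw [hypMeasure_coneSet_inter m (hlt.le.trans hε_le_one),
      integral_one_div_max_of_lt (abs_nonneg _) hlt hε_le_one, Real.log_zpow, div_eq_mul_inv,
      ← zpow_neg, neg_neg, zpow_natCast]
    congr 1
    push_cast
    ring
  · rw [hypMeasure_coneSet_inter m hle, integral_one_div_max_of_le hε hge hle]

theorem hypMeasure_cone_inter (m : ℕ) (t s : ℝ)
    (ht : t ∈ Set.Icc (0 : ℝ) 1) (hs : s ∈ Set.Icc (0 : ℝ) 1) :
    (|t - s| < (2 : ℝ) ^ (-(m : ℤ)) →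
      hypMeasure (coneSet m t ∩ coneSet m s) =
        ENNReal.ofReal ((m : ℝ) * Real.log 2 + 1 - 2 ^ (m : ℕ) * |t - s|)) ∧
    ((2 : ℝ) ^ (-(m : ℤ)) ≤ |t - s| → |t - s| ≤ 1 →
      hypMeasure (coneSet m t ∩ coneSet m s) = ENNReal.ofReal (Real.log (1 / |t - s|))) :=
  hypMeasure_cone_inter_general m t s
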